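/- Let S ⊆ S_Φ be a nonempty set. There exists a closed s-convex subset of S_Φ containing S if and only if there exist a unit vector u ∈ ℝⁿ and α > 0 such that ⟨x, u⟩ ≥ α for all x ∈ S. -/

import Mathlib

open Set
open scoped RealInnerProductSpace

/-- `rho Φ x = x / Φ x` (equal to `0` when `Φ x = 0`, in particular `rho Φ 0 = 0`). -/
noncomputable def rho {n : ℕ} (Φ : EuclideanSpace ℝ (Fin n) → ℝ)
    (x : EuclideanSpace ℝ (Fin n)) : EuclideanSpace ℝ (Fin n) := (Φ x)⁻¹ • x

/-- The `Φ`-sphere `S_Φ = {x | Φ x = 1}`. -/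
def sphereSet {n : ℕ} (Φ : EuclideanSpace ℝ (Fin n) → ℝ) : Set (EuclideanSpace ℝ (Fin n)) :=
  {x | Φ x = 1}

/-- `S` is s-convex: `ρ(λx + (1-λ)y) ∈ S` for all `x, y ∈ S`, `λ ∈ [0,1]`. -/
def SConvex {n : ℕ} (Φ : EuclideanSpace ℝ (Fin n) → ℝ)
    (S : Set (EuclideanSpace ℝ (Fin n))) : Prop :=
  ∀ x ∈ S, ∀ y ∈ S, ∀ l : ℝ, l ∈ Set.Icc (0 : ℝ) 1 → rho Φ (l • x + (1 - l) • y) ∈ S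

/-! If `C ⊆ S_Φ` is closed and s-convex, then the cone `(0, ∞) • C` is convex: a convex
combination of `t₁ x₁` and `t₂ x₂` is a positive multiple of some `λ x₁ + (1 - λ) x₂`, which is
in turn a positive multiple of its `ρ`-image in `C`. Hence `0 ∉ conv C`. As `S_Φ` is bounded, `C`
is compact, so is `conv C` in finite dimensions, and a hyperplane strictly separating `0` from
`conv C` gives `u` and `α`.

Conversely, if `S` lies in the half-space `α ≤ ⟪x, u⟫`, so does the compact convex set
`K = closure (conv S)`, on which `Φ > 0`. Then `ρ '' K` is a closed subset of `S_Φ` containing `S`,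
and it is s-convex because `λ ρ a + (1 - λ) ρ b` is a positive multiple of a point of `K` and `ρ`
is invariant under positive scaling. -/

lemma convexHull_range_eq_image_stdSimplex {E ι : Type*} [AddCommGroup E] [Module ℝ E]
    [Fintype ι] (v : ι → E) :
    convexHull ℝ (range v) = (fun w : ι → ℝ => ∑ i, w i • v i) '' stdSimplex ℝ ι := by
  classical
  change _ = Fintype.linearCombination ℝ v '' _
  rw [← convexHull_rangle_single_eq_stdSimplex, LinearMap.image_convexHull, ← range_comp]
  congr 2
  funext i
  simp

/-- Carathéodory's theorem, with a fixed number of possibly repeated points. -/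
lemma exists_fin_family_of_mem_convexHull {E : Type*} [AddCommGroup E] [Module ℝ E]
    [FiniteDimensional ℝ E] {s : Set E} {x : E} (hx : x ∈ convexHull ℝ s) :
    ∃ v : Fin (Module.finrank ℝ E + 1) → E, range v ⊆ s ∧ x ∈ convexHull ℝ (range v) := by
  rw [convexHull_eq_union] at hx
  simp only [mem_iUnion] at hx
  obtain ⟨t, hts, hind, hxt⟩ := hx
  obtain ⟨x₀, hx₀⟩ : (t : Set E).Nonempty := convexHull_nonempty_iff.1 ⟨x, hxt⟩
  obtain ⟨e⟩ : Nonempty (t ↪ Fin (Module.finrank ℝ E + 1)) := by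
    refine Function.Embedding.nonempty_of_card_le ?_
    simpa using hind.card_le_finrank_succ.trans (Nat.succ_le_succ (Submodule.finrank_le _))
  have hrange : range (Function.extend e ((↑) : t → E) fun _ => x₀) = t := by
    rw [range_extend e.injective, Subtype.range_coe, union_eq_left]
    rintro _ ⟨_, _, rfl⟩
    exact hx₀
  exact ⟨Function.extend e (↑) fun _ => x₀, hrange ▸ hts, hrange ▸ hxt⟩

lemma IsCompact.convexHull {E : Type*} [NormedAddCommGroup E] [NormedSpace ℝ E]
    [FiniteDimensional ℝ E] {s : Set E} (hs : IsCompact s) :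
    IsCompact (_root_.convexHull ℝ s) := by
  let ι := Fin (Module.finrank ℝ E + 1)
  have hhull : _root_.convexHull ℝ s = (fun p : (ι → ℝ) × (ι → E) => ∑ i, p.1 i • p.2 i) ''
      (stdSimplex ℝ ι ×ˢ univ.pi fun _ => s) := by
    apply Subset.antisymm
    · intro x hx
      obtain ⟨v, hvs, hxv⟩ := exists_fin_family_of_mem_convexHull hx
      rw [convexHull_range_eq_image_stdSimplex] at hxv
      obtain ⟨w, hw, rfl⟩ := hxv
      exact ⟨(w, v), ⟨hw, fun i _ => hvs (mem_range_self i)⟩, rfl⟩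
    · rintro _ ⟨⟨w, v⟩, ⟨hw, hv⟩, rfl⟩
      refine _root_.convexHull_mono (range_subset_iff.2 fun i => hv i (mem_univ i)) ?_
      rw [convexHull_range_eq_image_stdSimplex]
      exact mem_image_of_mem _ hw
  rw [hhull]
  exact ((isCompact_stdSimplex ℝ ι).prod (isCompact_univ_pi fun _ => hs)).image (by fun_prop)

lemma exists_unit_le_inner_of_zero_notMem {E : Type*} [NormedAddCommGroup E]
    [InnerProductSpace ℝ E] [CompleteSpace E] {K : Set E} (hK : Convex ℝ K) (hKc : IsClosed K)
    (hne : K.Nonempty) (h0 : (0 : E) ∉ K) :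
    ∃ u : E, ‖u‖ = 1 ∧ ∃ α : ℝ, 0 < α ∧ ∀ x ∈ K, α ≤ ⟪x, u⟫ := by
  obtain ⟨f, c, hf0, hfK⟩ := geometric_hahn_banach_point_closed hK hKc h0
  rw [map_zero] at hf0
  set v := (InnerProductSpace.toDual ℝ E).symm f
  have hv : ∀ x, ⟪x, v⟫ = f x := fun x => by
    rw [real_inner_comm, InnerProductSpace.toDual_symm_apply]
  have hv0 : v ≠ 0 := by
    obtain ⟨x, hx⟩ := hne
    rintro h
    have := hfK x hx
    rw [← hv, h, inner_zero_right] at this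
    linarith
  have hvn : 0 < ‖v‖ := norm_pos_iff.2 hv0
  refine ⟨‖v‖⁻¹ • v, by rw [norm_smul, norm_inv, norm_norm, inv_mul_cancel₀ hvn.ne'],
    ‖v‖⁻¹ * c, by positivity, fun x hx => ?_⟩
  rw [real_inner_smul_right, hv]
  exact mul_le_mul_of_nonneg_left (hfK x hx).le (by positivity)

section Homogeneous

variable {E : Type*} [NormedAddCommGroup E] [NormedSpace ℝ E] {Φ : E → ℝ}

lemma apply_zero_of_homogeneous (hhom : ∀ t : ℝ, 0 ≤ t → ∀ x, Φ (t • x) = t * Φ x) :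
    Φ 0 = 0 := by
  simpa using hhom 0 le_rfl 0

lemma exists_pos_mul_norm_le_of_homogeneous [ProperSpace E] (hc : Continuous Φ)
    (hhom : ∀ t : ℝ, 0 ≤ t → ∀ x, Φ (t • x) = t * Φ x) (hpos : ∀ x, x ≠ 0 → 0 < Φ x) :
    ∃ m : ℝ, 0 < m ∧ ∀ x, m * ‖x‖ ≤ Φ x := by
  cases subsingleton_or_nontrivial E
  · refine ⟨1, one_pos, fun x => ?_⟩
    rw [Subsingleton.elim x 0, norm_zero, mul_zero, apply_zero_of_homogeneous hhom]
  obtain ⟨x₀, hx₀, hmin⟩ := (isCompact_sphere (0 : E) 1).exists_isMinOn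
    (NormedSpace.sphere_nonempty.2 zero_le_one) hc.continuousOn
  refine ⟨Φ x₀, hpos x₀ (ne_zero_of_mem_unit_sphere ⟨x₀, hx₀⟩), fun x => ?_⟩
  rcases eq_or_ne x 0 with rfl | hx
  · rw [norm_zero, mul_zero, apply_zero_of_homogeneous hhom]
  have hxn : 0 < ‖x‖ := norm_pos_iff.2 hx
  have hunit : ‖x‖⁻¹ • x ∈ Metric.sphere (0 : E) 1 := by
    rw [mem_sphere_zero_iff_norm, norm_smul, norm_inv, norm_norm, inv_mul_cancel₀ hxn.ne']
  calc Φ x₀ * ‖x‖ ≤ Φ (‖x‖⁻¹ • x) * ‖x‖ := by gcongr; exact hmin hunit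
    _ = Φ x := by
      rw [hhom _ (inv_nonneg.2 hxn.le), mul_comm, ← mul_assoc, mul_inv_cancel₀ hxn.ne', one_mul]

end Homogeneous

section Euclidean

variable {n : ℕ} {Φ : EuclideanSpace ℝ (Fin n) → ℝ}

lemma zero_notMem_sphereSet (hhom : ∀ t : ℝ, 0 ≤ t → ∀ x, Φ (t • x) = t * Φ x) :
    (0 : EuclideanSpace ℝ (Fin n)) ∉ sphereSet Φ := fun h => by
  simp [sphereSet, apply_zero_of_homogeneous hhom] at h

lemma isBounded_sphereSet (hc : Continuous Φ)
    (hhom : ∀ t : ℝ, 0 ≤ t → ∀ x, Φ (t • x) = t * Φ x) (hpos : ∀ x, x ≠ 0 → 0 < Φ x) :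
    Bornology.IsBounded (sphereSet Φ) := by
  obtain ⟨m, hm, hle⟩ := exists_pos_mul_norm_le_of_homogeneous hc hhom hpos
  refine isBounded_iff_forall_norm_le.2 ⟨m⁻¹, fun x (hx : Φ x = 1) => ?_⟩
  rw [← mul_one m⁻¹, le_inv_mul_iff₀ hm, ← hx]
  exact hle x

lemma rho_smul (hhom : ∀ t : ℝ, 0 ≤ t → ∀ x, Φ (t • x) = t * Φ x) {t : ℝ} (ht : 0 < t)
    (x : EuclideanSpace ℝ (Fin n)) : rho Φ (t • x) = rho Φ x := by
  rw [rho, rho, hhom t ht.le, smul_smul, mul_inv, mul_right_comm, inv_mul_cancel₀ ht.ne', one_mul]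

lemma rho_mem_sphereSet (hhom : ∀ t : ℝ, 0 ≤ t → ∀ x, Φ (t • x) = t * Φ x)
    {x : EuclideanSpace ℝ (Fin n)} (hx : 0 < Φ x) : rho Φ x ∈ sphereSet Φ := by
  change Φ ((Φ x)⁻¹ • x) = 1
  rw [hhom _ (inv_nonneg.2 hx.le), inv_mul_cancel₀ hx.ne']

lemma rho_eq_self {x : EuclideanSpace ℝ (Fin n)} (hx : x ∈ sphereSet Φ) : rho Φ x = x := by
  rw [rho, show Φ x = 1 from hx, inv_one, one_smul]

lemma smul_rho {x : EuclideanSpace ℝ (Fin n)} (hx : Φ x ≠ 0) : Φ x • rho Φ x = x := by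
  rw [rho, smul_smul, mul_inv_cancel₀ hx, one_smul]

lemma continuousOn_rho (hc : Continuous Φ) {K : Set (EuclideanSpace ℝ (Fin n))}
    (hK : ∀ x ∈ K, Φ x ≠ 0) : ContinuousOn (rho Φ) K :=
  (hc.continuousOn.inv₀ hK).smul continuousOn_id

open scoped Pointwise

lemma SConvex.convex_Ioi_smul (hnn : ∀ x, 0 ≤ Φ x) {C : Set (EuclideanSpace ℝ (Fin n))}
    (hC : SConvex Φ C) (hC0 : (0 : EuclideanSpace ℝ (Fin n)) ∉ C) :
    Convex ℝ (Ioi (0 : ℝ) • C) := by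
  rintro _ ⟨t₁, ht₁ : 0 < t₁, x₁, hx₁, rfl⟩ _ ⟨t₂, ht₂ : 0 < t₂, x₂, hx₂, rfl⟩ a b ha hb hab
  have hs : 0 < a * t₁ + b * t₂ := by
    rcases ha.eq_or_lt with rfl | ha
    · rw [zero_add] at hab; subst hab; simpa using ht₂
    · have := mul_nonneg hb ht₂.le; positivity
  set l := a * t₁ / (a * t₁ + b * t₂)
  have hl : l ∈ Icc (0 : ℝ) 1 :=
    ⟨by positivity, (div_le_one hs).2 (le_add_of_nonneg_right (by positivity))⟩
  set w := l • x₁ + (1 - l) • x₂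
  have hw : rho Φ w ∈ C := hC x₁ hx₁ x₂ hx₂ l hl
  have hΦw : 0 < Φ w := by
    refine (hnn w).lt_of_ne fun h => hC0 ?_
    rwa [rho, ← h, inv_zero, zero_smul] at hw
  have h1l : 1 - l = b * t₂ / (a * t₁ + b * t₂) := by
    simp only [l]
    field_simp
    ring
  have hcomb : a • t₁ • x₁ + b • t₂ • x₂ = (a * t₁ + b * t₂) • w := by
    simp only [w, l, smul_add, smul_smul, h1l]
    congr 2 <;> field_simp
  refine ⟨(a * t₁ + b * t₂) * Φ w, mul_pos hs hΦw, rho Φ w, hw, ?_⟩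
  change _ • _ = a • t₁ • x₁ + b • t₂ • x₂
  rw [hcomb, mul_smul, smul_rho hΦw.ne']

lemma SConvex.zero_notMem_convexHull (hnn : ∀ x, 0 ≤ Φ x) {C : Set (EuclideanSpace ℝ (Fin n))}
    (hC : SConvex Φ C) (hC0 : (0 : EuclideanSpace ℝ (Fin n)) ∉ C) :
    (0 : EuclideanSpace ℝ (Fin n)) ∉ convexHull ℝ C := by
  have hsub : convexHull ℝ C ⊆ Ioi (0 : ℝ) • C :=
    convexHull_min (fun x hx => ⟨1, mem_Ioi.2 one_pos, x, hx, one_smul ℝ x⟩)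
      (hC.convex_Ioi_smul hnn hC0)
  rintro h
  obtain ⟨t, ht : 0 < t, x, hx, hx0 : t • x = 0⟩ := hsub h
  rw [smul_eq_zero_iff_right ht.ne'] at hx0
  exact hC0 (hx0 ▸ hx)

lemma sConvex_image_rho (hhom : ∀ t : ℝ, 0 ≤ t → ∀ x, Φ (t • x) = t * Φ x)
    {K : Set (EuclideanSpace ℝ (Fin n))} (hK : Convex ℝ K) (hpos : ∀ x ∈ K, 0 < Φ x) :
    SConvex Φ (rho Φ '' K) := by
  rintro _ ⟨a, ha, rfl⟩ _ ⟨b, hb, rfl⟩ l ⟨hl0, hl1⟩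
  have hΦa := hpos a ha
  have hΦb := hpos b hb
  have hc₁ : 0 ≤ l * (Φ a)⁻¹ := by positivity
  have hc₂ : 0 ≤ (1 - l) * (Φ b)⁻¹ := mul_nonneg (sub_nonneg.2 hl1) (by positivity)
  have hs : 0 < l * (Φ a)⁻¹ + (1 - l) * (Φ b)⁻¹ := by
    rcases hl0.eq_or_lt with rfl | hl
    · simpa using hΦb
    · have := mul_pos hl (inv_pos.2 hΦa); positivity
  obtain ⟨w, hw, hw_eq⟩ : l • rho Φ a + (1 - l) • rho Φ b ∈
      (l * (Φ a)⁻¹ + (1 - l) * (Φ b)⁻¹) • K := by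
    rw [hK.add_smul hc₁ hc₂, rho, rho, smul_smul, smul_smul]
    exact add_mem_add (smul_mem_smul_set ha) (smul_mem_smul_set hb)
  exact ⟨w, hw, by rw [← hw_eq, rho_smul hhom hs]⟩

lemma SConvex.exists_unit_le_inner (hc : Continuous Φ) (hnn : ∀ x, 0 ≤ Φ x)
    (hhom : ∀ t : ℝ, 0 ≤ t → ∀ x, Φ (t • x) = t * Φ x) (hpos : ∀ x, x ≠ 0 → 0 < Φ x)
    {C : Set (EuclideanSpace ℝ (Fin n))} (hC : SConvex Φ C) (hCsub : C ⊆ sphereSet Φ)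
    (hCcl : IsClosed C) (hne : C.Nonempty) :
    ∃ u : EuclideanSpace ℝ (Fin n), ‖u‖ = 1 ∧ ∃ α : ℝ, 0 < α ∧ ∀ x ∈ C, α ≤ ⟪x, u⟫ := by
  have hCcpt : IsCompact C :=
    Metric.isCompact_of_isClosed_isBounded hCcl ((isBounded_sphereSet hc hhom hpos).subset hCsub)
  obtain ⟨u, hu, α, hα, hαC⟩ := exists_unit_le_inner_of_zero_notMem (convex_convexHull ℝ C)
    hCcpt.convexHull.isClosed hne.convexHull
    (hC.zero_notMem_convexHull hnn fun h => zero_notMem_sphereSet hhom (hCsub h))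
  exact ⟨u, hu, α, hα, fun x hx => hαC x (subset_convexHull ℝ C hx)⟩

lemma exists_closed_sConvex_superset_of_le_inner (hc : Continuous Φ)
    (hhom : ∀ t : ℝ, 0 ≤ t → ∀ x, Φ (t • x) = t * Φ x) (hpos : ∀ x, x ≠ 0 → 0 < Φ x)
    {S : Set (EuclideanSpace ℝ (Fin n))} (hsub : S ⊆ sphereSet Φ)
    {u : EuclideanSpace ℝ (Fin n)} {α : ℝ} (hα : 0 < α) (hαS : ∀ x ∈ S, α ≤ ⟪x, u⟫) :
    ∃ C, C ⊆ sphereSet Φ ∧ IsClosed C ∧ SConvex Φ C ∧ S ⊆ C := by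
  set K := closure (convexHull ℝ S)
  have hKH : K ⊆ {x | α ≤ ⟪x, u⟫} :=
    closure_minimal (convexHull_min hαS (convex_halfSpace_ge
      ⟨fun x y => inner_add_left x y u, fun c x => real_inner_smul_left x u c⟩ α))
      (isClosed_le continuous_const (continuous_id.inner continuous_const))
  have hKpos : ∀ x ∈ K, 0 < Φ x := fun x hx => hpos x fun h => by
    have := hKH hx
    simp only [h, mem_ofPred_eq, inner_zero_left] at this
    linarith
  have hKcpt : IsCompact K := Metric.isCompact_of_isClosed_isBounded isClosed_closure
    (isBounded_convexHull.2 ((isBounded_sphereSet hc hhom hpos).subset hsub)).closure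
  refine ⟨rho Φ '' K, ?_, ?_, sConvex_image_rho hhom (convex_convexHull ℝ S).closure hKpos, ?_⟩
  · rintro _ ⟨x, hx, rfl⟩
    exact rho_mem_sphereSet hhom (hKpos x hx)
  · exact (hKcpt.image_of_continuousOn (continuousOn_rho hc fun x hx => (hKpos x hx).ne')).isClosed
  · exact fun x hx => ⟨x, subset_closure (subset_convexHull ℝ S hx), rho_eq_self (hsub hx)⟩

end Euclidean

theorem stmt15_general {n : ℕ} (Φ : EuclideanSpace ℝ (Fin n) → ℝ)
    (hc : Continuous Φ) (hnn : ∀ x, 0 ≤ Φ x)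
    (hhom : ∀ (t : ℝ), 0 ≤ t → ∀ x, Φ (t • x) = t * Φ x)
    (hzero : ∀ x, Φ x = 0 ↔ x = 0)
    (S : Set (EuclideanSpace ℝ (Fin n))) (hne : S.Nonempty) (hsub : S ⊆ sphereSet Φ) :
    (∃ C : Set (EuclideanSpace ℝ (Fin n)),
        C ⊆ sphereSet Φ ∧ IsClosed C ∧ SConvex Φ C ∧ S ⊆ C) ↔
      ∃ u : EuclideanSpace ℝ (Fin n), ‖u‖ = 1 ∧ ∃ α : ℝ, 0 < α ∧ ∀ x ∈ S, α ≤ ⟪x, u⟫ := by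
  have hpos : ∀ x, x ≠ 0 → 0 < Φ x := fun x hx => (hnn x).lt_of_ne' (mt (hzero x).1 hx)
  constructor
  · rintro ⟨C, hCsub, hCcl, hC, hSC⟩
    obtain ⟨u, hu, α, hα, hαC⟩ := hC.exists_unit_le_inner hc hnn hhom hpos hCsub hCcl (hne.mono hSC)
    exact ⟨u, hu, α, hα, fun x hx => hαC x (hSC hx)⟩
  · rintro ⟨u, -, α, hα, hαS⟩
    exact exists_closed_sConvex_superset_of_le_inner hc hhom hpos hsub hα hαS

theorem stmt15 {n : ℕ} (hn : 2 ≤ n) (Φ : EuclideanSpace ℝ (Fin n) → ℝ)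
    (hc : Continuous Φ) (hnn : ∀ x, 0 ≤ Φ x)
    (hhom : ∀ (t : ℝ), 0 ≤ t → ∀ x, Φ (t • x) = t * Φ x)
    (hzero : ∀ x, Φ x = 0 ↔ x = 0)
    (S : Set (EuclideanSpace ℝ (Fin n))) (hne : S.Nonempty) (hsub : S ⊆ sphereSet Φ) :
    (∃ C : Set (EuclideanSpace ℝ (Fin n)),
        C ⊆ sphereSet Φ ∧ IsClosed C ∧ SConvex Φ C ∧ S ⊆ C) ↔
      ∃ u : EuclideanSpace ℝ (Fin n), ‖u‖ = 1 ∧ ∃ α : ℝ, 0 < α ∧ ∀ x ∈ S, α ≤ ⟪x, u⟫ :=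
  stmt15_general Φ hc hnn hhom hzero S hne hsub
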